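/- If an instance of the minimum-cost flow problem has an optimal solution, then it has an optimal spanning tree solution, i.e., an optimal feasible flow x together with a partition (T,L,U) of the arcs such that x_{ij}=0 for arcs in L, x_{ij}=u_{ij} for arcs in U, and the arcs in T form a spanning tree. -/

import Mathlib

open Finset

variable {V A : Type}

/-- Excess of node `i` with respect to pseudoflow `x` and supplies `b`. -/
def excess [Fintype A] [DecidableEq V] (src tgt : A → V) (b : V → ℤ)
    (x : A → ℤ) (i : V) : ℤ :=
  b i + ∑ a ∈ Finset.univ.filter (fun a => tgt a = i), x a
      - ∑ a ∈ Finset.univ.filter (fun a => src a = i), x a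

/-- A pseudoflow obeys the nonnegativity and capacity constraints. -/
def IsPseudoflow (cap x : A → ℤ) : Prop := ∀ a, 0 ≤ x a ∧ x a ≤ cap a

/-- A feasible flow: pseudoflow satisfying the conservation constraints. -/
def IsFeasible [Fintype A] [DecidableEq V] (src tgt : A → V) (b : V → ℤ)
    (cap x : A → ℤ) : Prop :=
  IsPseudoflow cap x ∧ ∀ i, excess src tgt b x i = 0

/-- Total cost of a flow. -/
def flowCost [Fintype A] (c x : A → ℤ) : ℤ := ∑ a, c a * x a

/-- An optimal solution of the minimum-cost flow problem. -/
def IsOptimal [Fintype A] [DecidableEq V] (src tgt : A → V) (b : V → ℤ)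
    (cap c x : A → ℤ) : Prop :=
  IsFeasible src tgt b cap x ∧
    ∀ y, IsFeasible src tgt b cap y → flowCost c x ≤ flowCost c y

/-- Source of a residual arc: `(a, true)` is the forward copy of `a`,
`(a, false)` the backward copy. -/
def rsrc (src tgt : A → V) (p : A × Bool) : V := if p.2 then src p.1 else tgt p.1

/-- Target of a residual arc. -/
def rtgt (src tgt : A → V) (p : A × Bool) : V := if p.2 then tgt p.1 else src p.1

/-- Cost of a residual arc. -/
def rcost (c : A → ℤ) (p : A × Bool) : ℤ := if p.2 then c p.1 else -c p.1

/-- Whether a (forward/backward) arc is present in the residual network of `x`. -/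
def IsResidual (cap x : A → ℤ) (p : A × Bool) : Prop :=
  if p.2 then x p.1 < cap p.1 else 0 < x p.1

/-- Reduced cost of a residual arc with respect to potentials `π`. -/
def redcost (src tgt : A → V) (c : A → ℤ) (π : V → ℝ) (p : A × Bool) : ℝ :=
  (rcost c p : ℝ) + π (rsrc src tgt p) - π (rtgt src tgt p)

/-- A directed cycle (closed directed walk), given by `k > 0` arcs in cyclic order. -/
def IsCycle {E : Type} (s t : E → V) {k : ℕ} (hk : 0 < k) (cyc : Fin k → E) : Prop :=
  ∀ i : Fin k, t (cyc i) = s (cyc ⟨(i.1 + 1) % k, Nat.mod_lt _ hk⟩)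

/-- Underlying undirected (simple) graph of the arcs in `T`. -/
def underlying (src tgt : A → V) (T : Finset A) : SimpleGraph V where
  Adj i j := i ≠ j ∧ ∃ a ∈ T, (src a = i ∧ tgt a = j) ∨ (src a = j ∧ tgt a = i)
  symm := by
    constructor
    rintro i j ⟨hij, a, haT, h⟩
    exact ⟨hij.symm, a, haT, h.symm⟩
  loopless := by constructor; rintro i ⟨h, -⟩; exact h rfl

/-- Total excess of the excess nodes. -/
def totalExcess [Fintype V] [Fintype A] [DecidableEq V]
    (src tgt : A → V) (b : V → ℤ) (x : A → ℤ) : ℤ :=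
  ∑ i ∈ Finset.univ.filter (fun i => 0 < excess src tgt b x i), excess src tgt b x i

/-!
Among the optimal flows take one with the fewest free arcs (`0 < x a < cap a`). Its free arcs
form a forest: an undirected cycle through free arcs carries a `±1` circulation, and pushing flow
around it in its cost-nonincreasing direction until some arc reaches a bound gives an optimal flow
with fewer free arcs. Extend the forest to a maximal one; in a weakly connected network a maximal
forest is a spanning tree, and every arc outside it is not free, i.e. sits at `0` or at capacity.
-/

open SimpleGraph

section Forest

variable (src tgt : A → V)

structure IsForest (T : Finset A) : Prop where
  src_ne_tgt : ∀ a ∈ T, src a ≠ tgt a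
  injOn : Set.InjOn (fun a => s(src a, tgt a)) T
  isAcyclic : (underlying src tgt T).IsAcyclic

variable {src tgt}

lemma underlying_adj_iff {T : Finset A} {u v : V} :
    (underlying src tgt T).Adj u v ↔ u ≠ v ∧ ∃ a ∈ T, s(src a, tgt a) = s(u, v) := by
  simp only [underlying, Sym2.eq_iff]

lemma underlying_insert [DecidableEq A] (a : A) (T : Finset A) :
    underlying src tgt (insert a T) = underlying src tgt T ⊔ edge (src a) (tgt a) := by
  ext u v
  simp only [underlying_adj_iff, sup_adj, edge_adj, mem_insert, exists_eq_or_imp, Sym2.eq_iff]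
  aesop

lemma reachable_underlying_of_mem {T : Finset A} {a : A} (ha : a ∈ T) {u v : V}
    (huv : s(src a, tgt a) = s(u, v)) : (underlying src tgt T).Reachable u v := by
  by_cases h : u = v
  · exact h ▸ .rfl
  · exact (underlying_adj_iff.mpr ⟨h, a, ha, huv⟩).reachable

lemma IsForest.insert [DecidableEq A] {T : Finset A} (hT : IsForest src tgt T) {a : A}
    (ha : ¬ (underlying src tgt T).Reachable (src a) (tgt a)) :
    IsForest src tgt (insert a T) where
  src_ne_tgt b hb := by
    rcases mem_insert.mp hb with rfl | hb
    · exact fun h => ha (h ▸ .rfl)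
    · exact hT.src_ne_tgt b hb
  injOn := by
    rw [coe_insert, Set.injOn_insert fun haT => ha (reachable_underlying_of_mem haT rfl)]
    exact ⟨hT.injOn, fun ⟨b, hb, hba⟩ => ha (reachable_underlying_of_mem hb hba)⟩
  isAcyclic := by
    rw [underlying_insert]
    exact hT.isAcyclic.sup_edge_of_not_reachable ha

lemma IsForest.of_forall_not_reachable_erase [DecidableEq A] {T : Finset A}
    (h : ∀ a ∈ T, ¬ (underlying src tgt (T.erase a)).Reachable (src a) (tgt a)) :
    IsForest src tgt T where
  src_ne_tgt a ha heq := h a ha (heq ▸ .rfl)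
  injOn a ha b hb hab := by
    by_contra hne
    exact h a ha (reachable_underlying_of_mem (mem_erase.mpr ⟨Ne.symm hne, hb⟩) hab.symm)
  isAcyclic := by
    rw [isAcyclic_iff_forall_adj_isBridge]
    intro u v huv
    obtain ⟨-, a, ha, hauv⟩ := underlying_adj_iff.mp huv
    have hle : (underlying src tgt T).deleteEdges {s(u, v)} ≤ underlying src tgt (T.erase a) := by
      intro p q hpq
      obtain ⟨hpq, hne⟩ := (deleteEdges_adj ..).mp hpq
      obtain ⟨hpq, b, hb, hbpq⟩ := underlying_adj_iff.mp hpq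
      refine underlying_adj_iff.mpr ⟨hpq, b, mem_erase.mpr ⟨?_, hb⟩, hbpq⟩
      rintro rfl
      exact hne (hbpq ▸ hauv)
    intro hreach
    apply h a ha
    rcases Sym2.eq_iff.mp hauv with ⟨rfl, rfl⟩ | ⟨rfl, rfl⟩
    · exact hreach.mono hle
    · exact (hreach.mono hle).symm

lemma IsForest.card_add_one_of_connected [Fintype V] {T : Finset A} (hT : IsForest src tgt T)
    (hc : (underlying src tgt T).Connected) : T.card + 1 = Fintype.card V := by
  have hedges : (underlying src tgt T).edgeSet = (fun a => s(src a, tgt a)) '' T := by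
    ext ⟨u, v⟩
    simp only [mem_edgeSet, underlying_adj_iff, Set.mem_image, mem_coe]
    refine ⟨fun h => h.2, fun ⟨a, ha, hauv⟩ => ⟨?_, a, ha, hauv⟩⟩
    rintro rfl
    rcases Sym2.eq_iff.mp hauv with ⟨h₁, h₂⟩ | ⟨h₁, h₂⟩ <;> exact hT.src_ne_tgt a ha (h₁.trans h₂.symm)
  have htree := (isTree_iff_connected_and_card.mp ⟨hc, hT.isAcyclic⟩).2
  rwa [Nat.card_coe_set_eq, hedges, hT.injOn.ncard_image, Set.ncard_coe_finset,
    Nat.card_eq_fintype_card] at htree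

lemma connected_of_maximal_isForest [DecidableEq A] [Fintype A] {T : Finset A}
    (hconn : (underlying src tgt univ).Connected) (hT : Maximal (IsForest src tgt) T) :
    (underlying src tgt T).Connected := by
  have hspan : ∀ a, (underlying src tgt T).Reachable (src a) (tgt a) := by
    intro a
    by_contra ha
    have hins := hT.2 (hT.1.insert ha) (subset_insert a T)
    exact ha (reachable_underlying_of_mem (hins (mem_insert_self a T)) rfl)
  have hle : (underlying src tgt univ).Reachable ≤ (underlying src tgt T).Reachable := by
    simp only [reachable_eq_reflTransGen]
    refine Relation.reflTransGen_closed fun u v huv => ?_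
    obtain ⟨-, a, -, hauv⟩ := underlying_adj_iff.mp huv
    rw [← reachable_eq_reflTransGen]
    rcases Sym2.eq_iff.mp hauv with ⟨rfl, rfl⟩ | ⟨rfl, rfl⟩
    · exact hspan a
    · exact (hspan a).symm
  exact (connected_iff _).mpr ⟨fun u v => hle u v (hconn.preconnected u v), hconn.nonempty⟩

end Forest

section Flow

variable [Fintype A] [DecidableEq V] {src tgt : A → V}

variable (src tgt) in
def netInflow : (A → ℤ) →ₗ[ℤ] V → ℤ where
  toFun d i := ∑ a ∈ univ.filter (fun a => tgt a = i), d a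
    - ∑ a ∈ univ.filter (fun a => src a = i), d a
  map_add' d e := by
    ext i
    simp only [Pi.add_apply, sum_add_distrib]
    ring
  map_smul' t d := by
    ext i
    simp [mul_sum, mul_sub]

lemma netInflow_apply (d : A → ℤ) (i : V) :
    netInflow src tgt d i = ∑ a ∈ univ.filter (fun a => tgt a = i), d a
      - ∑ a ∈ univ.filter (fun a => src a = i), d a := rfl

lemma netInflow_single [DecidableEq A] (e : A) (σ : ℤ) :
    netInflow src tgt (Pi.single e σ) = Pi.single (tgt e) σ - Pi.single (src e) σ := by
  ext i
  simp [netInflow_apply, Pi.single_apply, eq_comm]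

lemma excess_add (b : V → ℤ) (x d : A → ℤ) :
    excess src tgt b (x + d) = excess src tgt b x + netInflow src tgt d := by
  ext i
  simp only [excess, Pi.add_apply, netInflow_apply, sum_add_distrib]
  ring

lemma flowCost_add (c x d : A → ℤ) : flowCost c (x + d) = flowCost c x + flowCost c d := by
  simp [flowCost, mul_add, sum_add_distrib]

lemma flowCost_smul (c d : A → ℤ) (t : ℤ) : flowCost c (t • d) = t * flowCost c d := by
  simp [flowCost, mul_sum, mul_left_comm]

lemma flowCost_neg (c d : A → ℤ) : flowCost c (-d) = -flowCost c d := by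
  simp [flowCost]

lemma exists_netInflow_single_of_adj [DecidableEq A] {S : Finset A} {u v : V}
    (h : (underlying src tgt S).Adj u v) :
    ∃ e ∈ S, ∃ σ : ℤ, |σ| = 1 ∧ s(src e, tgt e) = s(u, v) ∧
      netInflow src tgt (Pi.single e σ) = Pi.single v 1 - Pi.single u 1 := by
  obtain ⟨-, e, he, ⟨rfl, rfl⟩ | ⟨rfl, rfl⟩⟩ := h
  · exact ⟨e, he, 1, abs_one, rfl, netInflow_single e 1⟩
  · refine ⟨e, he, -1, by simp, Sym2.eq_swap, ?_⟩
    rw [netInflow_single, Pi.single_neg, Pi.single_neg]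
    abel

lemma exists_netInflow_eq_of_isTrail [DecidableEq A] {S : Finset A} {u v : V}
    (w : (underlying src tgt S).Walk u v) (hw : w.IsTrail) :
    ∃ d : A → ℤ, netInflow src tgt d = Pi.single v 1 - Pi.single u 1 ∧ (∀ a, |d a| ≤ 1) ∧
      ∀ a, d a ≠ 0 → a ∈ S ∧ s(src a, tgt a) ∈ w.edges := by
  induction w with
  | nil => exact ⟨0, by simp, by simp, by simp⟩
  | @cons u m v h p ih =>
    rw [Walk.isTrail_cons] at hw
    obtain ⟨d, hd, hd1, hdS⟩ := ih hw.1
    obtain ⟨e, he, σ, hσ, hem, hσe⟩ := exists_netInflow_single_of_adj h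
    have hde : d e = 0 := by
      by_contra hne
      exact hw.2 (hem ▸ (hdS e hne).2)
    refine ⟨d + Pi.single e σ, ?_, fun a => ?_, fun a ha => ?_⟩
    · rw [map_add, hd, hσe]
      abel
    · rcases eq_or_ne a e with rfl | hae
      · simp [hde, hσ]
      · simpa [hae] using hd1 a
    · rcases eq_or_ne a e with rfl | hae
      · exact ⟨he, by simp [hem]⟩
      · have := hdS a (by simpa [hae] using ha)
        exact ⟨this.1, by simp [this.2]⟩

end Flow

section Optimal

variable [Fintype A] [DecidableEq V] {src tgt : A → V} {b : V → ℤ} {cap c : A → ℤ}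

lemma IsOptimal.add_smul {x d : A → ℤ} (hx : IsOptimal src tgt b cap c x)
    (hd : netInflow src tgt d = 0) (hc : flowCost c d ≤ 0) {t : ℤ} (ht : 0 ≤ t)
    (hy : IsPseudoflow cap (x + t • d)) : IsOptimal src tgt b cap c (x + t • d) := by
  have hcost : flowCost c (x + t • d) ≤ flowCost c x := by
    rw [flowCost_add, flowCost_smul]
    linarith [mul_nonpos_of_nonneg_of_nonpos ht hc]
  refine ⟨⟨hy, fun i => ?_⟩, fun z hz => hcost.trans (hx.2 z hz)⟩
  rw [excess_add, map_smul, hd, smul_zero, add_zero]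
  exact hx.1.2 i

variable (cap) in
def freeArcs (x : A → ℤ) : Finset A := univ.filter fun a => 0 < x a ∧ x a < cap a

lemma IsOptimal.exists_card_freeArcs_lt {x d : A → ℤ} (hx : IsOptimal src tgt b cap c x)
    (hd : netInflow src tgt d = 0) (hd1 : ∀ a, |d a| ≤ 1)
    (hdF : ∀ a, d a ≠ 0 → a ∈ freeArcs cap x) (hd0 : d ≠ 0) :
    ∃ y, IsOptimal src tgt b cap c y ∧ (freeArcs cap y).card < (freeArcs cap x).card := by
  wlog hc : flowCost c d ≤ 0 generalizing d
  · exact this (by rw [map_neg, hd, neg_zero]) (by simpa using hd1) (by simpa using hdF)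
      (neg_ne_zero.mpr hd0) (by rw [flowCost_neg]; omega)
  have hfree : ∀ a, d a ≠ 0 → 0 < x a ∧ x a < cap a := fun a ha => by
    simpa [freeArcs] using hdF a ha
  have hunit : ∀ a, d a ≠ 0 → d a = 1 ∨ d a = -1 := fun a ha => by
    have := abs_le.mp (hd1 a)
    omega
  -- `room a` is the slack of arc `a` in the direction of `d a`; stepping by the least slack
  -- keeps the bounds and saturates the minimizing arc `a₀`.
  let room a := if 0 < d a then cap a - x a else x a
  obtain ⟨a₀, ha₀, hmin⟩ := (univ.filter (d · ≠ 0)).exists_min_image room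
    (by obtain ⟨a, ha⟩ := Function.ne_iff.mp hd0; exact ⟨a, by simpa using ha⟩)
  simp only [mem_filter, mem_univ, true_and] at ha₀ hmin
  set δ := room a₀ with hδ
  have hy : ∀ a, (x + δ • d) a = x a + δ * d a := fun a => rfl
  have hδ0 : 0 ≤ δ := by
    have := hfree a₀ ha₀
    simp only [hδ, room]
    split_ifs <;> omega
  have hpf : IsPseudoflow cap (x + δ • d) := by
    intro a
    have hxa := hx.1.1 a
    by_cases ha : d a = 0
    · simpa [hy, ha] using hxa
    · have hle := hmin a ha
      rcases hunit a ha with h | h <;> simp only [room, h] at hle <;>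
        simp only [hy, h] <;> split_ifs at hle <;> constructor <;> linarith
  refine ⟨_, hx.add_smul hd hc hδ0 hpf, card_lt_card ⟨fun a ha => ?_, fun hsub => ?_⟩⟩
  · by_cases hda : d a = 0
    · simpa [freeArcs, hy, hda] using ha
    · exact hdF a hda
  · have := hsub (hdF a₀ ha₀)
    simp only [freeArcs, mem_filter, mem_univ, true_and, hy] at this
    rcases hunit a₀ ha₀ with h | h <;> simp [hδ, room, h] at this

lemma IsOptimal.exists_card_freeArcs_lt_of_not_isForest [DecidableEq A] {x : A → ℤ}
    (hx : IsOptimal src tgt b cap c x) (hF : ¬ IsForest src tgt (freeArcs cap x)) :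
    ∃ y, IsOptimal src tgt b cap c y ∧ (freeArcs cap y).card < (freeArcs cap x).card := by
  obtain ⟨a, ha, hreach⟩ : ∃ a ∈ freeArcs cap x,
      (underlying src tgt ((freeArcs cap x).erase a)).Reachable (src a) (tgt a) := by
    by_contra! h
    exact hF (.of_forall_not_reachable_erase h)
  obtain ⟨w⟩ := hreach.symm
  obtain ⟨d, hd, hd1, hdS⟩ := exists_netInflow_eq_of_isTrail w.bypass w.bypass_isPath.isTrail
  have hda : d a = 0 := by
    by_contra hne
    exact notMem_erase a _ (hdS a hne).1
  refine hx.exists_card_freeArcs_lt (d := d + Pi.single a 1) ?_ (fun e => ?_) (fun e he => ?_) ?_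
  · rw [map_add, hd, netInflow_single]
    abel
  · rcases eq_or_ne e a with rfl | hea
    · simp [hda]
    · simpa [hea] using hd1 e
  · rcases eq_or_ne e a with rfl | hea
    · exact ha
    · exact mem_of_mem_erase (hdS e (by simpa [hea] using he)).1
  · exact Function.ne_iff.mpr ⟨a, by simp [hda]⟩

lemma IsOptimal.exists_isForest_freeArcs [DecidableEq A] {x : A → ℤ}
    (hx : IsOptimal src tgt b cap c x) :
    ∃ y, IsOptimal src tgt b cap c y ∧ IsForest src tgt (freeArcs cap y) := by
  induction hn : (freeArcs cap x).card using Nat.strong_induction_on generalizing x with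
  | _ n ih =>
    by_cases hF : IsForest src tgt (freeArcs cap x)
    · exact ⟨x, hx, hF⟩
    · obtain ⟨y, hy, hlt⟩ := hx.exists_card_freeArcs_lt_of_not_isForest hF
      exact ih _ (hn ▸ hlt) hy rfl

end Optimal

theorem exists_optimal_spanning_tree_solution_general
    [Fintype V] [Fintype A] [DecidableEq V] [DecidableEq A]
    (src tgt : A → V) (b : V → ℤ) (cap c : A → ℤ) (x₀ : A → ℤ)
    (hconn : (underlying src tgt (Finset.univ : Finset A)).Connected)
    (hopt : IsOptimal src tgt b cap c x₀) :
    ∃ (x : A → ℤ) (T L U : Finset A),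
      IsOptimal src tgt b cap c x ∧
      Disjoint T L ∧ Disjoint T U ∧ Disjoint L U ∧
      T ∪ L ∪ U = Finset.univ ∧
      (underlying src tgt T).Connected ∧ T.card = Fintype.card V - 1 ∧
      (∀ a ∈ L, x a = 0) ∧ (∀ a ∈ U, x a = cap a) := by
  obtain ⟨x, hx, hF⟩ := hopt.exists_isForest_freeArcs
  obtain ⟨T, hFT, hT⟩ := Finite.exists_le_maximal hF
  have hTconn := connected_of_maximal_isForest hconn hT
  refine ⟨x, T, (univ \ T).filter (x · = 0), (univ \ T).filter (x · ≠ 0), hx,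
    disjoint_sdiff.mono_right (filter_subset _ _), disjoint_sdiff.mono_right (filter_subset _ _),
    disjoint_filter_filter_not _ _ _, ?_, hTconn, ?_, fun a ha => (mem_filter.mp ha).2,
    fun a ha => ?_⟩
  · rw [union_assoc, filter_union_filter_not_eq, union_sdiff_of_subset (subset_univ T)]
  · have := hT.1.card_add_one_of_connected hTconn
    omega
  · obtain ⟨haT, hxa⟩ := mem_filter.mp ha
    have hnf : a ∉ freeArcs cap x := fun haF => (mem_sdiff.mp haT).2 (hFT haF)
    have := hx.1.1 a
    simp only [freeArcs, mem_filter, mem_univ, true_and] at hnf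
    omega

/-- if the minimum-cost flow problem (on a weakly connected network)
has an optimal solution, then it has an optimal spanning tree solution. -/
theorem exists_optimal_spanning_tree_solution
    [Fintype V] [Fintype A] [DecidableEq V] [DecidableEq A]
    (src tgt : A → V) (b : V → ℤ) (cap c : A → ℤ) (x₀ : A → ℤ)
    (hconn : (underlying src tgt (Finset.univ : Finset A)).Connected)
    (hcap : ∀ a, 0 ≤ cap a)
    (hopt : IsOptimal src tgt b cap c x₀) :
    ∃ (x : A → ℤ) (T L U : Finset A),
      IsOptimal src tgt b cap c x ∧
      Disjoint T L ∧ Disjoint T U ∧ Disjoint L U ∧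
      T ∪ L ∪ U = Finset.univ ∧
      (underlying src tgt T).Connected ∧ T.card = Fintype.card V - 1 ∧
      (∀ a ∈ L, x a = 0) ∧ (∀ a ∈ U, x a = cap a) :=
  exists_optimal_spanning_tree_solution_general src tgt b cap c x₀ hconn hopt
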